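/- arXiv:1703.00174 — 2 statements merged into one kernel-verified Lean document; each statement's English description precedes it below -/
import Mathlib

section
/- For a countable group G, the set of extralarge subsets of G is an F_σδ subset of P(G) ≅ {0,1}^G with the product topology. -/
open Pointwise

/-- The subset of `G` coded by a point of the Cantor cube `{0,1}^G`. -/
def toSet {G : Type*} (f : G → Bool) : Set G := {g : G | f g = true}

def IsFsigma {X : Type*} [TopologicalSpace X] (s : Set X) : Prop :=
  ∃ T : Set (Set X), T.Countable ∧ (∀ t ∈ T, IsClosed t) ∧ s = ⋃₀ T

def IsFsigmaDelta {X : Type*} [TopologicalSpace X] (s : Set X) : Prop :=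
  ∃ T : Set (Set X), T.Countable ∧ (∀ t ∈ T, IsFsigma t) ∧ s = ⋂₀ T

def IsGdeltaSigma {X : Type*} [TopologicalSpace X] (s : Set X) : Prop :=
  ∃ T : Set (Set X), T.Countable ∧ (∀ t ∈ T, IsGδ t) ∧ s = ⋃₀ T

def Large {G : Type*} [Group G] (A : Set G) : Prop :=
  ∃ F : Finset G, (F : Set G) * A = Set.univ

def Extralarge {G : Type*} [Group G] (A : Set G) : Prop :=
  ∀ L : Set G, Large L → Large (A ∩ L)

open scoped Classical in
def core {G : Type*} [Group G] (F : Finset G) (A : Set G) : Set G :=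
  {x | x ∈ A ∧ ∃ f ∈ insert 1 F, ∀ f' ∈ insert 1 F, f'⁻¹ * (f * x) ∈ A}

lemma large_iff {G : Type*} [Group G] {B : Set G} :
    Large B ↔ ∃ E : Finset G, ∀ g : G, ∃ e ∈ E, e⁻¹ * g ∈ B := by
  constructor
  · rintro ⟨F, hF⟩
    refine ⟨F, fun g => ?_⟩
    have hg : g ∈ (F : Set G) * B := hF ▸ Set.mem_univ g
    rcases hg with ⟨f, hf, b, hb, rfl⟩
    exact ⟨f, hf, by simpa [mul_assoc] using hb⟩
  · rintro ⟨E, hE⟩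
    refine ⟨E, Set.eq_univ_of_forall fun g => ?_⟩
    rcases hE g with ⟨e, he, hmem⟩
    exact ⟨e, he, e⁻¹ * g, hmem, by group⟩

open scoped Classical in
lemma extralarge_iff {G : Type*} [Group G] {A : Set G} :
    Extralarge A ↔ ∀ F : Finset G, Large (core F A) := by
  classical
  constructor
  · intro hA F
    set F' : Finset G := insert 1 F with hF'
    set B : Set G := {g | ∀ f ∈ F', f⁻¹ * g ∈ A} with hB
    set L : Set G := {x | (∃ f ∈ F', f * x ∈ B) ∨ x ∉ A} with hLdef
    have h1 : (1 : G) ∈ F' := Finset.mem_insert_self 1 F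
    have hLlarge : Large L := by
      rw [large_iff]
      refine ⟨F', fun g => ?_⟩
      by_cases hg : ∀ f ∈ F', f⁻¹ * g ∈ A
      · refine ⟨1, h1, Or.inl ⟨1, h1, ?_⟩⟩
        simp only [hB, Set.mem_setOf_eq, one_mul, inv_one]
        intro f hf
        exact hg f hf
      · push_neg at hg
        obtain ⟨f, hf, hfA⟩ := hg
        exact ⟨f, hf, Or.inr hfA⟩
    have := hA L hLlarge
    have heq : A ∩ L = core F A := by
      ext x
      simp only [hLdef, hB, Set.mem_inter_iff, Set.mem_setOf_eq, core]
      constructor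
      · rintro ⟨hxA, hOr⟩
        rcases hOr with ⟨f, hf, hfB⟩ | h
        · exact ⟨hxA, f, hf, hfB⟩
        · exact absurd hxA h
      · rintro ⟨hxA, f, hf, hall⟩
        exact ⟨hxA, Or.inl ⟨f, hf, hall⟩⟩
    rwa [heq] at this
  · intro h L hL
    rw [large_iff] at hL ⊢
    obtain ⟨F0, hF0⟩ := hL
    have hF0' : ∀ g : G, ∃ f ∈ insert 1 F0, f⁻¹ * g ∈ L := by
      intro g
      obtain ⟨f, hf, hfm⟩ := hF0 g
      exact ⟨f, Finset.mem_insert_of_mem hf, hfm⟩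
    obtain ⟨E, hE⟩ := large_iff.mp (h F0)
    refine ⟨Finset.image (fun p : (G × G) × G => p.1.1 * p.1.2⁻¹ * p.2)
      ((E ×ˢ insert 1 F0) ×ˢ insert 1 F0), fun g => ?_⟩
    obtain ⟨e, he, hcore⟩ := hE g
    obtain ⟨hA', f, hf, hall⟩ := hcore
    obtain ⟨f'', hf'', hL''⟩ := hF0' (f * (e⁻¹ * g))
    refine ⟨e * f⁻¹ * f'', ?_, ?_⟩
    · refine Finset.mem_image.mpr ⟨((e, f), f''), ?_, rfl⟩
      simp only [Finset.mem_product]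
      exact ⟨⟨he, hf⟩, hf''⟩
    · have hw : (e * f⁻¹ * f'')⁻¹ * g = f''⁻¹ * (f * (e⁻¹ * g)) := by group
      rw [hw]
      exact ⟨hall f'' hf'', hL''⟩

lemma isClosed_coord {G : Type*} (x : G) : IsClosed {f : G → Bool | f x = true} := by
  have : {f : G → Bool | f x = true} = (fun f : G → Bool => f x) ⁻¹' {true} := rfl
  rw [this]
  exact (isClosed_discrete _).preimage (continuous_apply x)

open scoped Classical in
lemma isClosed_D {G : Type*} [Group G] (F : Finset G) (E : Finset G) (g : G) :
    IsClosed {f : G → Bool | ∃ e ∈ E, e⁻¹ * g ∈ core F (toSet f)} := by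
  have heq : {f : G → Bool | ∃ e ∈ E, e⁻¹ * g ∈ core F (toSet f)} =
      ⋃ e ∈ E, ({f : G → Bool | f (e⁻¹ * g) = true} ∩
        ⋃ a ∈ insert 1 F, ⋂ b ∈ insert 1 F,
          {f : G → Bool | f (b⁻¹ * (a * (e⁻¹ * g))) = true}) := by
    ext f
    simp only [Set.mem_setOf_eq, core, toSet, Set.mem_iUnion, Set.mem_inter_iff,
      Set.mem_iInter, exists_prop]
  rw [heq]
  refine Set.Finite.isClosed_biUnion E.finite_toSet fun e _ => (isClosed_coord _).inter ?_
  refine Set.Finite.isClosed_biUnion (insert 1 F).finite_toSet fun a _ => ?_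
  exact isClosed_biInter fun b _ => isClosed_coord _

theorem isFsigmaDelta_extralarge {G : Type*} [Group G] [Countable G] :
    IsFsigmaDelta {f : G → Bool | Extralarge (toSet f)} := by
  classical
  refine ⟨Set.range (fun F : Finset G =>
      {f : G → Bool | Large (core F (toSet f))}), Set.countable_range _, ?_, ?_⟩
  · rintro t ⟨F, rfl⟩
    refine ⟨Set.range (fun E : Finset G =>
        {f : G → Bool | ∀ g : G, ∃ e ∈ E, e⁻¹ * g ∈ core F (toSet f)}),
      Set.countable_range _, ?_, ?_⟩
    · rintro t ⟨E, rfl⟩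
      show IsClosed {f : G → Bool | ∀ g : G, ∃ e ∈ E, e⁻¹ * g ∈ core F (toSet f)}
      have heq : {f : G → Bool | ∀ g : G, ∃ e ∈ E, e⁻¹ * g ∈ core F (toSet f)} =
          ⋂ g : G, {f : G → Bool | ∃ e ∈ E, e⁻¹ * g ∈ core F (toSet f)} := by
        ext f; simp only [Set.mem_setOf_eq, Set.mem_iInter]
      rw [heq]
      exact isClosed_iInter fun g => isClosed_D F E g
    · rw [Set.sUnion_range]
      ext f
      simp only [Set.mem_setOf_eq, Set.mem_iUnion, large_iff]
  · rw [Set.sInter_range]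
    ext f
    simp only [Set.mem_setOf_eq, Set.mem_iInter, extralarge_iff]
end

section
/- For a countable group G, the set of near P-small subsets of G is an F_σδ subset of P(G) ≅ {0,1}^G with the product topology. -/
open Pointwise

def NearPSmall {G : Type*} [Group G] (A : Set G) : Prop :=
  ∀ n : ℕ, ∃ g : Fin (n + 1) → G,
    ∀ i j : Fin (n + 1), i ≠ j → (g i • A ∩ g j • A).Finite

lemma mem_smul_toSet {G : Type*} [Group G] (g : G) (f : G → Bool) (x : G) :
    x ∈ g • toSet f ↔ f (g⁻¹ * x) = true := by
  rw [Set.mem_smul_set_iff_inv_smul_mem]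
  rfl

lemma isOpen_eval {G : Type*} (a : G) : IsOpen {f : G → Bool | f a = true} := by
  have : {f : G → Bool | f a = true} = (fun f : G → Bool => f a) ⁻¹' {true} := rfl
  rw [this]
  exact (continuous_apply a).isOpen_preimage _ (isOpen_discrete _)

lemma isClosed_piece {G : Type*} [Group G] (g h : G) (F : Finset G) :
    IsClosed {f : G → Bool | (g • toSet f ∩ h • toSet f : Set G) ⊆ ↑F} := by
  have heq : {f : G → Bool | (g • toSet f ∩ h • toSet f : Set G) ⊆ ↑F} =
      ⋂ (x : G) (_ : x ∉ F),
        {f : G → Bool | ¬(f (g⁻¹ * x) = true ∧ f (h⁻¹ * x) = true)} := by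
    ext f
    simp only [Set.mem_setOf_eq, Set.mem_iInter]
    constructor
    · intro hs x hx hmem
      exact hx (hs ⟨(mem_smul_toSet g f x).2 hmem.1, (mem_smul_toSet h f x).2 hmem.2⟩)
    · rintro hs x ⟨hx1, hx2⟩
      by_contra hxF
      exact hs x hxF ⟨(mem_smul_toSet g f x).1 hx1, (mem_smul_toSet h f x).1 hx2⟩
  rw [heq]
  refine isClosed_iInter fun x => isClosed_iInter fun _ => ?_
  have : {f : G → Bool | ¬(f (g⁻¹ * x) = true ∧ f (h⁻¹ * x) = true)} =
      ({f : G → Bool | f (g⁻¹ * x) = true} ∩ {f : G → Bool | f (h⁻¹ * x) = true})ᶜ := by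
    ext f; simp [Set.mem_setOf_eq]
  rw [this]
  exact isClosed_compl_iff.2 (IsOpen.inter (isOpen_eval _) (isOpen_eval _))

lemma isFsigma_level {G : Type*} [Group G] [Countable G] (n : ℕ) :
    IsFsigma {f : G → Bool | ∃ g : Fin (n + 1) → G,
      ∀ i j : Fin (n + 1), i ≠ j → (g i • toSet f ∩ g j • toSet f).Finite} := by
  refine ⟨Set.range (fun p : (Fin (n + 1) → G) × Finset G =>
    {f : G → Bool | ∀ i j : Fin (n + 1), i ≠ j →
      (p.1 i • toSet f ∩ p.1 j • toSet f : Set G) ⊆ ↑p.2}), Set.countable_range _, ?_, ?_⟩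
  · rintro t ⟨p, rfl⟩
    have : {f : G → Bool | ∀ i j : Fin (n + 1), i ≠ j →
        (p.1 i • toSet f ∩ p.1 j • toSet f : Set G) ⊆ ↑p.2} =
        ⋂ (i : Fin (n + 1)) (j : Fin (n + 1)) (_ : i ≠ j),
          {f : G → Bool | (p.1 i • toSet f ∩ p.1 j • toSet f : Set G) ⊆ ↑p.2} := by
      ext f; simp [Set.mem_iInter]
    show IsClosed {f : G → Bool | ∀ i j : Fin (n + 1), i ≠ j →
      (p.1 i • toSet f ∩ p.1 j • toSet f : Set G) ⊆ ↑p.2}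
    rw [this]
    exact isClosed_iInter fun i => isClosed_iInter fun j => isClosed_iInter fun _ =>
      isClosed_piece _ _ _
  · ext f
    simp only [Set.mem_setOf_eq, Set.mem_sUnion, Set.mem_range, exists_exists_eq_and]
    constructor
    · rintro ⟨g, hg⟩
      have hS : (⋃ q : Fin (n + 1) × Fin (n + 1),
          {x : G | q.1 ≠ q.2 ∧ x ∈ g q.1 • toSet f ∩ g q.2 • toSet f}).Finite := by
        refine Set.finite_iUnion fun q => ?_
        by_cases hq : q.1 = q.2
        · convert Set.finite_empty
          ext x; simp [hq]
        · exact (hg q.1 q.2 hq).subset fun x hx => hx.2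
      refine ⟨⟨g, hS.toFinset⟩, fun i j hij x hx => ?_⟩
      simp only [Set.Finite.coe_toFinset]
      exact Set.mem_iUnion.2 ⟨⟨i, j⟩, hij, hx⟩
    · rintro ⟨⟨g, F⟩, hg⟩
      exact ⟨g, fun i j hij => F.finite_toSet.subset (hg i j hij)⟩

theorem isFsigmaDelta_nearPSmall {G : Type*} [Group G] [Countable G] :
    IsFsigmaDelta {f : G → Bool | NearPSmall (toSet f)} := by
  refine ⟨Set.range (fun n : ℕ => {f : G → Bool | ∃ g : Fin (n + 1) → G,
      ∀ i j : Fin (n + 1), i ≠ j → (g i • toSet f ∩ g j • toSet f).Finite}),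
    Set.countable_range _, ?_, ?_⟩
  · rintro t ⟨n, rfl⟩
    exact isFsigma_level n
  · ext f
    simp only [Set.mem_setOf_eq, Set.mem_sInter, Set.mem_range]
    constructor
    · rintro h t ⟨n, rfl⟩
      exact h n
    · intro h n
      exact h _ ⟨n, rfl⟩
end
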